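/- Let $p > 1$, $m, \alpha_2, c \in \mathbb{R}$ with $\alpha_2 < 2$ and $\frac{m+1}{p} < c + 1 - \alpha_2$. Let $u \in W^{2,p}_{loc}((0,\infty))$ be such that $y^{\alpha_2}(u'' + c\, u'/y) \in L^p((0,\infty); y^m dy)$, and suppose $\lim_{y \to 0^+} y^c u'(y) = 0$. Then $\|y^{\alpha_2 - 1} u'\|_{L^p((0,\infty); y^m dy)} \le C \|y^{\alpha_2}(u'' + c u'/y)\|_{L^p((0,\infty); y^m dy)}$ with $C = \left(c + 1 - \alpha_2 - \frac{m+1}{p}\right)^{-1}$. -/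

import Mathlib

/-!
With `f = y^α₂ (u'' + c u'/y)` and `v = y^c u'` one has `v' = y^(c-α₂) f`, and `v(0⁺) = 0` gives
`|v y| ≤ ∫₀ʸ s^(c-α₂) |f s| ds`. Hence `|y^(α₂-1) u'|` is bounded by the Hardy operator
`H g y = y^(β-1) ∫₀ʸ s^(-β) g s ds`, `β = α₂ - c`, applied to `|f|`. The weighted Hardy inequality
`‖H g‖_{L^p(y^m dy)} ≤ K⁻¹ ‖g‖_{L^p(y^m dy)}`, `K = 1 - β - (m+1)/p > 0`, follows from Hölder's
inequality against the weight `s^(K-1)` on `(0, y)` and Tonelli, since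
`∫ₛ^∞ y^(-1-K) dy = s^(-K)/K`. The Hardy inequality is proved for `ℝ≥0∞`-valued `g`, where Hölder
and Tonelli need no integrability.
-/

open MeasureTheory Filter
open scoped ENNReal Topology

/-- The weighted measure `y^m dy` on `(0,∞)`. -/
noncomputable def wm (m : ℝ) : Measure ℝ :=
  (volume.restrict (Set.Ioi 0)).withDensity fun y => ENNReal.ofReal (y ^ m)

open Set ENNReal

lemma ofReal_rpow_mul_ofReal_rpow {y : ℝ} (hy : 0 < y) (a b : ℝ) :
    ENNReal.ofReal (y ^ a) * ENNReal.ofReal (y ^ b) = ENNReal.ofReal (y ^ (a + b)) := by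
  rw [← ofReal_mul (Real.rpow_nonneg hy.le a), ← Real.rpow_add hy]

lemma ofReal_rpow_rpow {y : ℝ} (hy : 0 ≤ y) (a : ℝ) {p : ℝ} (hp : 0 ≤ p) :
    ENNReal.ofReal (y ^ a) ^ p = ENNReal.ofReal (y ^ (a * p)) := by
  rw [ofReal_rpow_of_nonneg (Real.rpow_nonneg hy a) hp, ← Real.rpow_mul hy]

lemma lintegral_Ioo_rpow {r y : ℝ} (hr : -1 < r) (hy : 0 ≤ y) :
    ∫⁻ s in Ioo 0 y, ENNReal.ofReal (s ^ r) = ENNReal.ofReal (y ^ (r + 1) / (r + 1)) := by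
  have hint : IntegrableOn (fun s : ℝ => s ^ r) (Ioo 0 y) :=
    (intervalIntegrable_iff_integrableOn_Ioo_of_le hy).1
      (intervalIntegral.intervalIntegrable_rpow' hr)
  rw [← ofReal_integral_eq_lintegral_ofReal hint
    ((ae_restrict_iff' measurableSet_Ioo).2 (.of_forall fun s hs => Real.rpow_nonneg hs.1.le r)),
    ← integral_Ioc_eq_integral_Ioo, ← intervalIntegral.integral_of_le hy,
    integral_rpow (.inl hr), Real.zero_rpow (by linarith), sub_zero]

lemma lintegral_Ioi_rpow {r s : ℝ} (hr : r < -1) (hs : 0 < s) :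
    ∫⁻ y in Ioi s, ENNReal.ofReal (y ^ r) = ENNReal.ofReal (s ^ (r + 1) / (-(r + 1))) := by
  rw [← ofReal_integral_eq_lintegral_ofReal (integrableOn_Ioi_rpow_of_lt hr hs)
    ((ae_restrict_iff' measurableSet_Ioi).2
      (.of_forall fun y hy => Real.rpow_nonneg (hs.trans hy).le r)),
    integral_Ioi_rpow_of_lt hr hs, neg_div, ← div_neg]

lemma lintegral_Ioi_mul_lintegral_Ioo_comm {h k : ℝ → ℝ≥0∞}
    (hh : AEMeasurable h (volume.restrict (Ioi 0)))
    (hk : AEMeasurable k (volume.restrict (Ioi 0))) :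
    ∫⁻ y in Ioi 0, h y * ∫⁻ s in Ioo 0 y, k s = ∫⁻ s in Ioi 0, k s * ∫⁻ y in Ioi s, h y := by
  set F : ℝ × ℝ → ℝ≥0∞ := {q | q.2 < q.1}.indicator fun q => h q.1 * k q.2
  have hF : AEMeasurable F ((volume.restrict (Ioi 0)).prod (volume.restrict (Ioi 0))) :=
    (hh.comp_fst.mul hk.comp_snd).indicator (measurableSet_lt measurable_snd measurable_fst)
  have inner_snd (y : ℝ) : ∫⁻ s in Ioi 0, F (y, s) = h y * ∫⁻ s in Ioo 0 y, k s := by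
    have : ∀ s, F (y, s) = (Iio y).indicator (fun s => h y * k s) s := fun s => rfl
    simp_rw [this, lintegral_indicator measurableSet_Iio,
      Measure.restrict_restrict measurableSet_Iio, Iio_inter_Ioi]
    exact lintegral_const_mul'' _
      (hk.mono_measure (Measure.restrict_mono Ioo_subset_Ioi_self le_rfl))
  have inner_fst (s : ℝ) (hs : 0 < s) : ∫⁻ y in Ioi 0, F (y, s) = k s * ∫⁻ y in Ioi s, h y := by
    have : ∀ y, F (y, s) = (Ioi s).indicator (fun y => k s * h y) y := fun y => by
      simp only [F, indicator, mem_ofPred_eq, mem_Ioi, mul_comm]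
    simp_rw [this, lintegral_indicator measurableSet_Ioi,
      Measure.restrict_restrict measurableSet_Ioi, inter_eq_left.2 (Ioi_subset_Ioi hs.le)]
    exact lintegral_const_mul'' _
      (hh.mono_measure (Measure.restrict_mono (Ioi_subset_Ioi hs.le) le_rfl))
  calc ∫⁻ y in Ioi 0, h y * ∫⁻ s in Ioo 0 y, k s
      = ∫⁻ y in Ioi 0, ∫⁻ s in Ioi 0, F (y, s) := by simp_rw [inner_snd]
    _ = ∫⁻ s in Ioi 0, ∫⁻ y in Ioi 0, F (y, s) := lintegral_lintegral_swap hF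
    _ = ∫⁻ s in Ioi 0, k s * ∫⁻ y in Ioi s, h y :=
        setLIntegral_congr_fun measurableSet_Ioi inner_fst

lemma eLpNorm_wm {ε : Type*} [ENorm ε] (m : ℝ) {p : ℝ} (hp : 0 < p) (F : ℝ → ε) :
    eLpNorm F (ENNReal.ofReal p) (wm m)
      = (∫⁻ y in Ioi 0, ENNReal.ofReal (y ^ m) * ‖F y‖ₑ ^ p) ^ (1 / p) := by
  rw [eLpNorm_eq_lintegral_rpow_enorm_toReal (by simp [hp]) ofReal_ne_top, toReal_ofReal hp.le, wm,
    lintegral_withDensity_eq_lintegral_mul_non_measurable _ (by fun_prop)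
      (.of_forall fun _ => ofReal_lt_top)]
  rfl

lemma restrict_Ioi_absolutelyContinuous_wm (m : ℝ) : volume.restrict (Ioi 0) ≪ wm m :=
  withDensity_absolutelyContinuous' (by fun_prop) <| ae_restrict_of_forall_mem measurableSet_Ioi
    fun _ hy => (ofReal_pos.2 (Real.rpow_pos_of_pos hy m)).ne'

lemma rpow_lintegral_mul_le {α : Type*} [MeasurableSpace α] (μ : Measure α) {p q : ℝ}
    (hpq : p.HolderConjugate q) {f g : α → ℝ≥0∞} (hf : AEMeasurable f μ) (hg : AEMeasurable g μ) :
    (∫⁻ a, f a * g a ∂μ) ^ p ≤ (∫⁻ a, f a ^ p ∂μ) * (∫⁻ a, g a ^ q ∂μ) ^ (p - 1) := by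
  calc (∫⁻ a, f a * g a ∂μ) ^ p
      ≤ ((∫⁻ a, f a ^ p ∂μ) ^ (1 / p) * (∫⁻ a, g a ^ q ∂μ) ^ (1 / q)) ^ p :=
        rpow_le_rpow (lintegral_mul_le_Lp_mul_Lq μ hpq hf hg) hpq.nonneg
    _ = (∫⁻ a, f a ^ p ∂μ) * (∫⁻ a, g a ^ q ∂μ) ^ (p - 1) := by
        have hq : 1 / q * p = p - 1 := by
          rw [one_div, ← hpq.one_sub_inv]; field_simp [hpq.ne_zero]
        rw [mul_rpow_of_nonneg _ _ hpq.nonneg, ← rpow_mul, ← rpow_mul, hq,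
          one_div_mul_cancel hpq.ne_zero, rpow_one]

/-- Hölder with the splitting `s ^ r = s ^ (r - b) * s ^ b`, where `b * q = K - 1`,
so that the conjugate factor is `∫₀ʸ s ^ (K - 1) = y ^ K / K`. -/
lemma rpow_lintegral_Ioo_rpow_mul_le {p K r y : ℝ} (hp : 1 < p) (hK : 0 < K) (hy : 0 ≤ y)
    {g : ℝ → ℝ≥0∞} (hg : AEMeasurable g (volume.restrict (Ioo 0 y))) :
    (∫⁻ s in Ioo 0 y, ENNReal.ofReal (s ^ r) * g s) ^ p ≤
      (∫⁻ s in Ioo 0 y, ENNReal.ofReal (s ^ (r * p + (1 - K) * (p - 1))) * g s ^ p) *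
        ENNReal.ofReal (y ^ K / K) ^ (p - 1) := by
  have hpq := Real.HolderConjugate.conjExponent hp
  set q := p.conjExponent
  set b := (K - 1) / q
  have hq : q ≠ 0 := hpq.symm.ne_zero
  have hsplit : ∀ s ∈ Ioo 0 y,
      ENNReal.ofReal (s ^ r) * g s = ENNReal.ofReal (s ^ (r - b)) * g s * ENNReal.ofReal (s ^ b) :=
    fun s hs => by rw [mul_right_comm, ofReal_rpow_mul_ofReal_rpow hs.1, sub_add_cancel]
  have hfirst : ∀ s ∈ Ioo 0 y, (ENNReal.ofReal (s ^ (r - b)) * g s) ^ p =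
      ENNReal.ofReal (s ^ (r * p + (1 - K) * (p - 1))) * g s ^ p := fun s hs => by
    rw [mul_rpow_of_nonneg _ _ hpq.nonneg, ofReal_rpow_rpow hs.1.le _ hpq.nonneg]
    congr 3
    have hbp : b * p = (K - 1) * (p - 1) := by
      rw [show b = (K - 1) * q⁻¹ from div_eq_mul_inv _ _, ← hpq.one_sub_inv]
      field_simp [hpq.ne_zero]
    linear_combination -hbp
  have hsecond : ∫⁻ s in Ioo 0 y, ENNReal.ofReal (s ^ b) ^ q = ENNReal.ofReal (y ^ K / K) := by
    rw [setLIntegral_congr_fun measurableSet_Ioo fun s hs => by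
      rw [ofReal_rpow_rpow hs.1.le _ hpq.symm.nonneg, div_mul_cancel₀ _ hq],
      lintegral_Ioo_rpow (by linarith) hy, sub_add_cancel]
  calc (∫⁻ s in Ioo 0 y, ENNReal.ofReal (s ^ r) * g s) ^ p
      = (∫⁻ s in Ioo 0 y, ENNReal.ofReal (s ^ (r - b)) * g s * ENNReal.ofReal (s ^ b)) ^ p := by
        rw [setLIntegral_congr_fun measurableSet_Ioo hsplit]
    _ ≤ _ := rpow_lintegral_mul_le _ hpq (by fun_prop) (by fun_prop)
    _ = _ := by rw [setLIntegral_congr_fun measurableSet_Ioo hfirst, hsecond]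

noncomputable def hardyOperator (β : ℝ) (g : ℝ → ℝ≥0∞) (y : ℝ) : ℝ≥0∞ :=
  ENNReal.ofReal (y ^ (β - 1)) * ∫⁻ s in Ioo 0 y, ENNReal.ofReal (s ^ (-β)) * g s

section Hardy

variable {p m β : ℝ} {g : ℝ → ℝ≥0∞}

lemma ofReal_rpow_mul_hardyOperator_rpow_le {K y : ℝ} (hp : 1 < p) (hK : 0 < K)
    (hKm : K = 1 - β - (m + 1) / p) (hy : 0 < y) (hg : AEMeasurable g (volume.restrict (Ioo 0 y))) :
    ENNReal.ofReal (y ^ m) * hardyOperator β g y ^ p ≤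
      ENNReal.ofReal K⁻¹ ^ (p - 1) * (ENNReal.ofReal (y ^ (-(1 + K))) *
        ∫⁻ s in Ioo 0 y, ENNReal.ofReal (s ^ (m + K)) * g s ^ p) := by
  have hp0 : 0 < p := by linarith
  have hholder := rpow_lintegral_Ioo_rpow_mul_le (r := -β) hp hK hy.le hg
  have hexp : -β * p + (1 - K) * (p - 1) = m + K := by rw [hKm]; field_simp; ring
  rw [hexp, div_eq_mul_inv, ofReal_mul (Real.rpow_nonneg hy.le K),
    mul_rpow_of_nonneg _ _ (by linarith), ofReal_rpow_rpow hy.le _ (by linarith)] at hholder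
  calc ENNReal.ofReal (y ^ m) * hardyOperator β g y ^ p
      = ENNReal.ofReal (y ^ m) * ENNReal.ofReal (y ^ ((β - 1) * p)) *
          (∫⁻ s in Ioo 0 y, ENNReal.ofReal (s ^ (-β)) * g s) ^ p := by
        rw [hardyOperator, mul_rpow_of_nonneg _ _ hp0.le, ofReal_rpow_rpow hy.le _ hp0.le,
          mul_assoc]
    _ ≤ ENNReal.ofReal (y ^ m) * ENNReal.ofReal (y ^ ((β - 1) * p)) *
          ((∫⁻ s in Ioo 0 y, ENNReal.ofReal (s ^ (m + K)) * g s ^ p) *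
            (ENNReal.ofReal (y ^ (K * (p - 1))) * ENNReal.ofReal K⁻¹ ^ (p - 1))) := by gcongr
    _ = ENNReal.ofReal K⁻¹ ^ (p - 1) * (ENNReal.ofReal (y ^ (m + (β - 1) * p + K * (p - 1))) *
          ∫⁻ s in Ioo 0 y, ENNReal.ofReal (s ^ (m + K)) * g s ^ p) := by
        rw [← ofReal_rpow_mul_ofReal_rpow hy, ← ofReal_rpow_mul_ofReal_rpow hy]; ring
    _ = _ := by congr 4; rw [hKm]; field_simp; ring

lemma lintegral_hardyOperator_rpow_le (hp : 1 < p) (hK : 0 < 1 - β - (m + 1) / p)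
    (hg : AEMeasurable g (volume.restrict (Ioi 0))) :
    ∫⁻ y in Ioi 0, ENNReal.ofReal (y ^ m) * hardyOperator β g y ^ p ≤
      ENNReal.ofReal (1 - β - (m + 1) / p)⁻¹ ^ p *
        ∫⁻ y in Ioi 0, ENNReal.ofReal (y ^ m) * g y ^ p := by
  set K := 1 - β - (m + 1) / p
  set C := ENNReal.ofReal K⁻¹
  have hC0 : C ≠ 0 := (ofReal_pos.2 (inv_pos.2 hK)).ne'
  have hCtop : C ≠ ⊤ := ofReal_ne_top
  set A : ℝ → ℝ≥0∞ := fun y => ∫⁻ s in Ioo 0 y, ENNReal.ofReal (s ^ (m + K)) * g s ^ p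
  have hpoint (y : ℝ) (hy : 0 < y) : ENNReal.ofReal (y ^ m) * hardyOperator β g y ^ p ≤
      C ^ (p - 1) * (ENNReal.ofReal (y ^ (-(1 + K))) * A y) :=
    ofReal_rpow_mul_hardyOperator_rpow_le hp hK rfl hy
      (hg.mono_measure (Measure.restrict_mono Ioo_subset_Ioi_self le_rfl))
  have htail (s : ℝ) (hs : 0 < s) :
      ENNReal.ofReal (s ^ (m + K)) * g s ^ p * ∫⁻ y in Ioi s, ENNReal.ofReal (y ^ (-(1 + K))) =
        C * (ENNReal.ofReal (s ^ m) * g s ^ p) := by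
    have hcancel : ENNReal.ofReal (s ^ (m + K)) * ENNReal.ofReal (s ^ (-K)) =
        ENNReal.ofReal (s ^ m) := by
      rw [ofReal_rpow_mul_ofReal_rpow hs, add_neg_cancel_right]
    rw [lintegral_Ioi_rpow (by linarith) hs, show -(1 + K) + 1 = -K by ring, neg_neg,
      div_eq_mul_inv, ofReal_mul (Real.rpow_nonneg hs.le _), ← hcancel]
    ring
  calc ∫⁻ y in Ioi 0, ENNReal.ofReal (y ^ m) * hardyOperator β g y ^ p
      ≤ ∫⁻ y in Ioi 0, C ^ (p - 1) * (ENNReal.ofReal (y ^ (-(1 + K))) * A y) :=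
        setLIntegral_mono' measurableSet_Ioi hpoint
    _ = C ^ (p - 1) * ∫⁻ s in Ioi 0,
          ENNReal.ofReal (s ^ (m + K)) * g s ^ p *
            ∫⁻ y in Ioi s, ENNReal.ofReal (y ^ (-(1 + K))) := by
        rw [lintegral_const_mul' _ _ (rpow_ne_top_of_nonneg (by linarith) hCtop),
          lintegral_Ioi_mul_lintegral_Ioo_comm (by fun_prop) (by fun_prop)]
    _ = C ^ p * ∫⁻ y in Ioi 0, ENNReal.ofReal (y ^ m) * g y ^ p := by
        have hCp : C ^ (p - 1) * C = C ^ p := by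
          nth_rewrite 2 [← rpow_one C]
          rw [← rpow_add _ _ hC0 hCtop, sub_add_cancel]
        rw [setLIntegral_congr_fun measurableSet_Ioi htail, lintegral_const_mul' _ _ hCtop,
          ← mul_assoc, hCp]

theorem eLpNorm_hardyOperator_le (hp : 1 < p) (hK : 0 < 1 - β - (m + 1) / p)
    (hg : AEMeasurable g (volume.restrict (Ioi 0))) :
    eLpNorm (hardyOperator β g) (ENNReal.ofReal p) (wm m) ≤
      ENNReal.ofReal (1 - β - (m + 1) / p)⁻¹ * eLpNorm g (ENNReal.ofReal p) (wm m) := by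
  have hp0 : 0 < p := by linarith
  simp only [eLpNorm_wm m hp0, enorm_eq_self]
  calc (∫⁻ y in Ioi 0, ENNReal.ofReal (y ^ m) * hardyOperator β g y ^ p) ^ (1 / p)
      ≤ (ENNReal.ofReal (1 - β - (m + 1) / p)⁻¹ ^ p *
          ∫⁻ y in Ioi 0, ENNReal.ofReal (y ^ m) * g y ^ p) ^ (1 / p) :=
        rpow_le_rpow (lintegral_hardyOperator_rpow_le hp hK hg) (by positivity)
    _ = _ := by
        rw [mul_rpow_of_nonneg _ _ (by positivity), ← rpow_mul, mul_one_div_cancel hp0.ne',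
          rpow_one]

end Hardy

lemma enorm_le_lintegral_Ioo_of_hasDerivAt {E : Type*} [NormedAddCommGroup E] [NormedSpace ℝ E]
    [CompleteSpace E] {v v' : ℝ → E} {a y : ℝ} (hay : a < y)
    (hv : ∀ s ∈ Ioc a y, HasDerivAt v (v' s) s)
    (hv' : AEStronglyMeasurable v' (volume.restrict (Ioo a y)))
    (h0 : Tendsto v (𝓝[>] a) (𝓝 0)) :
    ‖v y‖ₑ ≤ ∫⁻ s in Ioo a y, ‖v' s‖ₑ := by
  by_cases hW : ∫⁻ s in Ioo a y, ‖v' s‖ₑ = ⊤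
  · exact hW ▸ le_top
  have hint : IntegrableOn v' (Ioo a y) := ⟨hv', lt_top_iff_ne_top.2 hW⟩
  have hincrement : ∀ x ∈ Ioo a y, ‖v y - v x‖ₑ ≤ ∫⁻ s in Ioo a y, ‖v' s‖ₑ := fun x hx => by
    have hxy := hx.2.le
    have hsub : Ioo x y ⊆ Ioo a y := Ioo_subset_Ioo_left hx.1.le
    rw [← intervalIntegral.integral_eq_sub_of_hasDerivAt
        (fun s hs => hv s ⟨hx.1.trans_le (uIcc_of_le hxy ▸ hs).1, (uIcc_of_le hxy ▸ hs).2⟩)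
        ((intervalIntegrable_iff_integrableOn_Ioo_of_le hxy).2 (hint.mono_set hsub)),
      intervalIntegral.integral_of_le hxy, integral_Ioc_eq_integral_Ioo]
    exact (enorm_integral_le_lintegral_enorm _).trans (lintegral_mono_set hsub)
  have hlim : Tendsto (fun x => ‖v y - v x‖ₑ) (𝓝[>] a) (𝓝 ‖v y‖ₑ) := by
    simpa using (tendsto_const_nhds.sub h0).enorm
  exact le_of_tendsto hlim (eventually_of_mem (Ioo_mem_nhdsGT hay) hincrement)

lemma hasDerivAt_rpow_mul {w w' : ℝ → ℝ} {s : ℝ} (c α : ℝ) (hs : 0 < s)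
    (hw : HasDerivAt w (w' s) s) :
    HasDerivAt (fun t => t ^ c * w t) (s ^ (c - α) * (s ^ α * (w' s + c * w s / s))) s := by
  refine ((Real.hasDerivAt_rpow_const (p := c) (.inl hs.ne')).mul hw).congr_deriv ?_
  rw [Real.rpow_sub_one hs.ne', ← mul_assoc, ← Real.rpow_add hs, sub_add_cancel]
  field_simp
  ring

theorem stmt14_general (p m α₂ c : ℝ) (hp : 1 < p)
    (h : (m + 1) / p < c + 1 - α₂)
    (u' u'' : ℝ → ℝ)
    (h2 : ∀ y, 0 < y → HasDerivAt u' (u'' y) y)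
    (hf : MemLp (fun y => y ^ α₂ * (u'' y + c * u' y / y)) (ENNReal.ofReal p) (wm m))
    (h0 : Tendsto (fun y => y ^ c * u' y) (𝓝[>] 0) (𝓝 0)) :
    eLpNorm (fun y => y ^ (α₂ - 1) * u' y) (ENNReal.ofReal p) (wm m) ≤
      ENNReal.ofReal (c + 1 - α₂ - (m + 1) / p)⁻¹ *
        eLpNorm (fun y => y ^ α₂ * (u'' y + c * u' y / y)) (ENNReal.ofReal p) (wm m) := by
  set f := fun y => y ^ α₂ * (u'' y + c * u' y / y)
  have hac := restrict_Ioi_absolutelyContinuous_wm m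
  have hpoint : ∀ y : ℝ, 0 < y →
      ‖y ^ (α₂ - 1) * u' y‖ₑ ≤ hardyOperator (α₂ - c) (fun s => ‖f s‖ₑ) y := fun y hy => by
    have htrace := enorm_le_lintegral_Ioo_of_hasDerivAt hy
      (fun s hs => hasDerivAt_rpow_mul c α₂ hs.1 (h2 s hs.1))
      ((by fun_prop : Measurable fun s : ℝ => s ^ (c - α₂)).aestronglyMeasurable.mul
        ((hf.1.mono_ac hac).mono_measure (Measure.restrict_mono Ioo_subset_Ioi_self le_rfl))) h0
    have hsplit : y ^ (α₂ - 1) * u' y = y ^ (α₂ - c - 1) * (y ^ c * u' y) := by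
      rw [← mul_assoc, ← Real.rpow_add hy]; ring_nf
    rw [hsplit, enorm_mul, Real.enorm_eq_ofReal (Real.rpow_nonneg hy.le _), hardyOperator]
    refine mul_le_mul_right
      (htrace.trans_eq (setLIntegral_congr_fun measurableSet_Ioo fun s hs => ?_)) _
    rw [enorm_mul, Real.enorm_eq_ofReal (Real.rpow_nonneg hs.1.le _), neg_sub]
  calc eLpNorm (fun y => y ^ (α₂ - 1) * u' y) (ENNReal.ofReal p) (wm m)
      ≤ eLpNorm (hardyOperator (α₂ - c) fun s => ‖f s‖ₑ) (ENNReal.ofReal p) (wm m) :=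
        eLpNorm_mono_enorm_ae <| (withDensity_absolutelyContinuous _ _).ae_le <|
          ae_restrict_of_forall_mem measurableSet_Ioi fun y hy => by
            simpa only [enorm_eq_self] using hpoint y hy
    _ ≤ ENNReal.ofReal (1 - (α₂ - c) - (m + 1) / p)⁻¹ *
          eLpNorm (fun s => ‖f s‖ₑ) (ENNReal.ofReal p) (wm m) :=
        eLpNorm_hardyOperator_le hp (by linarith) (hf.1.enorm.mono_ac hac)
    _ = _ := by rw [eLpNorm_enorm, show 1 - (α₂ - c) = c + 1 - α₂ by ring]

/-- Weighted Hardy inequality for the Bessel-type operator: if `(m+1)/p < c+1-α₂`,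
`y^{α₂}(u'' + c u'/y) ∈ L^p_m` and `y^c u'(y) → 0` as `y → 0⁺`, then
`‖y^{α₂-1} u'‖ ≤ (c+1-α₂-(m+1)/p)⁻¹ ‖y^{α₂}(u'' + c u'/y)‖`. -/
theorem stmt14 (p m α₂ c : ℝ) (hp : 1 < p) (hα : α₂ < 2)
    (h : (m + 1) / p < c + 1 - α₂)
    (u u' u'' : ℝ → ℝ)
    (h1 : ∀ y, 0 < y → HasDerivAt u (u' y) y)
    (h2 : ∀ y, 0 < y → HasDerivAt u' (u'' y) y)
    (hf : MemLp (fun y => y ^ α₂ * (u'' y + c * u' y / y)) (ENNReal.ofReal p) (wm m))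
    (h0 : Tendsto (fun y => y ^ c * u' y) (𝓝[>] 0) (𝓝 0)) :
    eLpNorm (fun y => y ^ (α₂ - 1) * u' y) (ENNReal.ofReal p) (wm m) ≤
      ENNReal.ofReal (c + 1 - α₂ - (m + 1) / p)⁻¹ *
        eLpNorm (fun y => y ^ α₂ * (u'' y + c * u' y / y)) (ENNReal.ofReal p) (wm m) :=
  stmt14_general p m α₂ c hp h u' u'' h2 hf h0
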